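/- Offline performance bound in dynamics-KL form (Theorem 4 via the representation–dynamics equivalence): for two transition kernels P_src, P_tar with P_tar(s,a)(s') > 0 for all (s,a,s'), and two policies π_D (the empirical behavior policy of the offline source dataset) and π on the same finite state and action spaces (same reward, discount, and initial distribution), J[P_tar](π) − J[P_src](π) ≥ −(4·r_max/(1−γ)²) · Σ_s ν[P_src,π_D](s) · D_TV( π_D(s), π(s) ) − (√2·γ·r_max/(1−γ)²) · Σ_{(s,a)} ρ[P_src,π_D](s,a) · √( D_KL( P_src(s,a) ‖ P_tar(s,a) ) ). -/

import Mathlib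

open Real

noncomputable section

variable {S A : Type*} [Fintype S] [Fintype A]

/-- Time-`t` state-action distribution `d_t[P,pol]` started from the initial state
distribution `ρ0`:  `d_0(s,a) = ρ0(s)·pol(s)(a)` and
`d_{t+1}(s',a') = Σ_{(s,a)} d_t(s,a)·P(s,a)(s')·pol(s')(a')`. -/
def dDist (P : S → A → PMF S) (pol : S → PMF A) (ρ0 : PMF S) : ℕ → S × A → ℝ
  | 0 => fun p => (ρ0 p.1).toReal * (pol p.1 p.2).toReal
  | (t + 1) => fun p' =>
      ∑ p : S × A, dDist P pol ρ0 t p * (P p.1 p.2 p'.1).toReal * (pol p'.1 p'.2).toReal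

/-- Normalized state-action occupancy `ρ[P,pol](s,a) = (1−γ)·Σ_t γ^t·d_t[P,pol](s,a)`. -/
def occ (P : S → A → PMF S) (pol : S → PMF A) (ρ0 : PMF S) (γ : ℝ) (p : S × A) : ℝ :=
  (1 - γ) * ∑' t : ℕ, γ ^ t * dDist P pol ρ0 t p

/-- Normalized state occupancy `ν[P,pol](s) = Σ_a ρ[P,pol](s,a)`. -/
def stateOcc (P : S → A → PMF S) (pol : S → PMF A) (ρ0 : PMF S) (γ : ℝ) (s : S) : ℝ :=
  ∑ a : A, occ P pol ρ0 γ (s, a)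

/-- Expected discounted return `J[P](pol) = Σ_t γ^t Σ_{(s,a)} d_t[P,pol](s,a)·r(s,a)`. -/
def Jret (P : S → A → PMF S) (pol : S → PMF A) (ρ0 : PMF S) (r : S → A → ℝ) (γ : ℝ) : ℝ :=
  ∑' t : ℕ, γ ^ t * ∑ p : S × A, dDist P pol ρ0 t p * r p.1 p.2

/-- Value function `V[P,pol](s)`: the return with the recursion started from the point
distribution at `s` (i.e. `d_0(s',a) = 1[s'=s]·pol(s')(a)`). -/
def Vval (P : S → A → PMF S) (pol : S → PMF A) (r : S → A → ℝ) (γ : ℝ) (s : S) : ℝ :=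
  Jret P pol (PMF.pure s) r γ

/-- Action-value function `Q[P,pol](s,a) = r(s,a) + γ·Σ_{s'} P(s,a)(s')·V[P,pol](s')`. -/
def Qval (P : S → A → PMF S) (pol : S → PMF A) (r : S → A → ℝ) (γ : ℝ) (s : S) (a : A) : ℝ :=
  r s a + γ * ∑ s' : S, (P s a s').toReal * Vval P pol r γ s'

/-- Total variation distance between two pmfs on a finite type:
`D_TV(p,q) = (1/2)·Σ_x |p(x) − q(x)|`. -/
def dTV {X : Type*} [Fintype X] (p q : PMF X) : ℝ :=
  (1 / 2) * ∑ x : X, |(p x).toReal - (q x).toReal|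

/-- Kullback–Leibler divergence between two pmfs on a finite type (with `q` everywhere
positive): `D_KL(p‖q) = Σ_x p(x)·log(p(x)/q(x))`, with the convention `0·log 0 = 0`. -/
def dKL {X : Type*} [Fintype X] (p q : PMF X) : ℝ :=
  ∑ x : X, (p x).toReal * Real.log ((p x).toReal / (q x).toReal)

/-- Shannon entropy of a pmf on a finite type, `H(p) = −Σ_x p(x)·log p(x)`,
with the convention `0·log 0 = 0`. -/
def entropyPMF {X : Type*} [Fintype X] (p : PMF X) : ℝ :=
  - ∑ x : X, (p x).toReal * Real.log (p x).toReal

end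

section MDPaux

variable {S A : Type*} [Fintype S] [Fintype A]

private lemma pmf_sum_toReal {X : Type*} [Fintype X] (p : PMF X) :
    ∑ x : X, (p x).toReal = 1 := by
  have h := p.tsum_coe
  rw [tsum_fintype] at h
  have h2 := congrArg ENNReal.toReal h
  rwa [ENNReal.toReal_sum (fun a _ => p.apply_ne_top a), ENNReal.toReal_one] at h2

private lemma dDist_nonneg (P : S → A → PMF S) (pol : S → PMF A) (ρ0 : PMF S) :
    ∀ (t : ℕ) (p : S × A), 0 ≤ dDist P pol ρ0 t p := by
  intro t
  induction t with
  | zero => exact fun p => mul_nonneg ENNReal.toReal_nonneg ENNReal.toReal_nonneg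
  | succ t ih =>
    intro p
    exact Finset.sum_nonneg fun q _ =>
      mul_nonneg (mul_nonneg (ih q) ENNReal.toReal_nonneg) ENNReal.toReal_nonneg

private lemma sum_prod_pol (pol : S → PMF A) (f : S → ℝ) :
    ∑ p' : S × A, f p'.1 * (pol p'.1 p'.2).toReal = ∑ s : S, f s := by
  rw [Fintype.sum_prod_type]
  refine Finset.sum_congr rfl fun s _ => ?_
  show ∑ y : A, f s * (pol s y).toReal = f s
  rw [← Finset.mul_sum, pmf_sum_toReal, mul_one]

private lemma dDist_sum_one (P : S → A → PMF S) (pol : S → PMF A) (ρ0 : PMF S) :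
    ∀ t : ℕ, ∑ p : S × A, dDist P pol ρ0 t p = 1 := by
  intro t
  induction t with
  | zero =>
    show ∑ p : S × A, (ρ0 p.1).toReal * (pol p.1 p.2).toReal = 1
    rw [sum_prod_pol pol (fun s => (ρ0 s).toReal), pmf_sum_toReal]
  | succ t ih =>
    show ∑ p' : S × A, ∑ p : S × A,
        dDist P pol ρ0 t p * (P p.1 p.2 p'.1).toReal * (pol p'.1 p'.2).toReal = 1
    rw [Finset.sum_comm]
    have hinner : ∀ p : S × A, ∑ p' : S × A,
        dDist P pol ρ0 t p * (P p.1 p.2 p'.1).toReal * (pol p'.1 p'.2).toReal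
        = dDist P pol ρ0 t p := by
      intro p
      rw [sum_prod_pol pol (fun s' => dDist P pol ρ0 t p * (P p.1 p.2 s').toReal),
        ← Finset.mul_sum, pmf_sum_toReal, mul_one]
    rw [Finset.sum_congr rfl fun p _ => hinner p, ih]

private lemma dDist_le_one (P : S → A → PMF S) (pol : S → PMF A) (ρ0 : PMF S)
    (t : ℕ) (p : S × A) : dDist P pol ρ0 t p ≤ 1 := by
  rw [← dDist_sum_one P pol ρ0 t]
  exact Finset.single_le_sum (fun q (_ : q ∈ Finset.univ) => dDist_nonneg P pol ρ0 t q)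
    (Finset.mem_univ p)

private lemma dDist_marg (P : S → A → PMF S) (pol : S → PMF A) (ρ0 : PMF S)
    (t : ℕ) (s' : S) :
    ∑ a' : A, dDist P pol ρ0 (t+1) (s', a')
      = ∑ p : S × A, dDist P pol ρ0 t p * (P p.1 p.2 s').toReal := by
  show ∑ a' : A, ∑ p : S × A,
      dDist P pol ρ0 t p * (P p.1 p.2 s').toReal * (pol s' a').toReal = _
  rw [Finset.sum_comm]
  refine Finset.sum_congr rfl fun p _ => ?_
  rw [← Finset.mul_sum, pmf_sum_toReal, mul_one]

private lemma l1_rec (P1 P2 : S → A → PMF S) (pol1 pol2 : S → PMF A) (ρ0 : PMF S) (t : ℕ) :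
    ∑ p : S × A, |dDist P1 pol1 ρ0 (t+1) p - dDist P2 pol2 ρ0 (t+1) p| ≤
      (∑ p : S × A, |dDist P1 pol1 ρ0 t p - dDist P2 pol2 ρ0 t p|)
      + (∑ p : S × A, dDist P2 pol2 ρ0 t p *
          ∑ s' : S, |(P1 p.1 p.2 s').toReal - (P2 p.1 p.2 s').toReal|)
      + ∑ s' : S, (∑ a' : A, dDist P2 pol2 ρ0 (t+1) (s', a')) *
          ∑ b : A, |(pol1 s' b).toReal - (pol2 s' b).toReal| := by
  have hc := dDist_nonneg P1 pol1 ρ0 t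
  have ha := dDist_nonneg P2 pol2 ρ0 t
  have step : ∀ p' : S × A, |dDist P1 pol1 ρ0 (t+1) p' - dDist P2 pol2 ρ0 (t+1) p'| ≤
      (∑ p : S × A, |dDist P1 pol1 ρ0 t p - dDist P2 pol2 ρ0 t p|
          * (P1 p.1 p.2 p'.1).toReal * (pol1 p'.1 p'.2).toReal)
      + (∑ p : S × A, dDist P2 pol2 ρ0 t p
          * |(P1 p.1 p.2 p'.1).toReal - (P2 p.1 p.2 p'.1).toReal| * (pol1 p'.1 p'.2).toReal)
      + (∑ p : S × A, dDist P2 pol2 ρ0 t p * (P2 p.1 p.2 p'.1).toReal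
          * |(pol1 p'.1 p'.2).toReal - (pol2 p'.1 p'.2).toReal|) := by
    intro p'
    have hde : dDist P1 pol1 ρ0 (t+1) p' - dDist P2 pol2 ρ0 (t+1) p' =
        (∑ p : S × A, (dDist P1 pol1 ρ0 t p - dDist P2 pol2 ρ0 t p)
            * (P1 p.1 p.2 p'.1).toReal * (pol1 p'.1 p'.2).toReal)
        + (∑ p : S × A, dDist P2 pol2 ρ0 t p
            * ((P1 p.1 p.2 p'.1).toReal - (P2 p.1 p.2 p'.1).toReal) * (pol1 p'.1 p'.2).toReal)
        + (∑ p : S × A, dDist P2 pol2 ρ0 t p * (P2 p.1 p.2 p'.1).toReal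
            * ((pol1 p'.1 p'.2).toReal - (pol2 p'.1 p'.2).toReal)) := by
      show (∑ p : S × A, dDist P1 pol1 ρ0 t p * (P1 p.1 p.2 p'.1).toReal * (pol1 p'.1 p'.2).toReal)
          - (∑ p : S × A, dDist P2 pol2 ρ0 t p * (P2 p.1 p.2 p'.1).toReal * (pol2 p'.1 p'.2).toReal) = _
      rw [← Finset.sum_sub_distrib, ← Finset.sum_add_distrib, ← Finset.sum_add_distrib]
      exact Finset.sum_congr rfl fun p _ => by ring
    rw [hde]
    refine le_trans (abs_add_le _ _) (le_trans (add_le_add_left (abs_add_le _ _) _) ?_)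
    refine add_le_add (add_le_add ?_ ?_) ?_
    · refine le_trans (Finset.abs_sum_le_sum_abs _ _) (le_of_eq ?_)
      refine Finset.sum_congr rfl fun p _ => ?_
      rw [abs_mul, abs_mul, abs_of_nonneg (ENNReal.toReal_nonneg),
        abs_of_nonneg (ENNReal.toReal_nonneg)]
    · refine le_trans (Finset.abs_sum_le_sum_abs _ _) (le_of_eq ?_)
      refine Finset.sum_congr rfl fun p _ => ?_
      rw [abs_mul, abs_mul, abs_of_nonneg (ha p), abs_of_nonneg (ENNReal.toReal_nonneg)]
    · refine le_trans (Finset.abs_sum_le_sum_abs _ _) (le_of_eq ?_)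
      refine Finset.sum_congr rfl fun p _ => ?_
      rw [abs_mul, abs_mul, abs_of_nonneg (ha p), abs_of_nonneg (ENNReal.toReal_nonneg)]
  refine le_trans (Finset.sum_le_sum fun p' (_ : p' ∈ Finset.univ) => step p') ?_
  rw [Finset.sum_add_distrib, Finset.sum_add_distrib]
  refine add_le_add (add_le_add (le_of_eq ?_) (le_of_eq ?_)) (le_of_eq ?_)
  · -- T1
    rw [Finset.sum_comm]
    refine Finset.sum_congr rfl fun p _ => ?_
    rw [sum_prod_pol pol1
      (fun s' => |dDist P1 pol1 ρ0 t p - dDist P2 pol2 ρ0 t p| * (P1 p.1 p.2 s').toReal),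
      ← Finset.mul_sum, pmf_sum_toReal, mul_one]
  · -- T2
    rw [Finset.sum_comm]
    refine Finset.sum_congr rfl fun p _ => ?_
    rw [sum_prod_pol pol1
      (fun s' => dDist P2 pol2 ρ0 t p * |(P1 p.1 p.2 s').toReal - (P2 p.1 p.2 s').toReal|),
      ← Finset.mul_sum]
  · -- T3
    rw [Fintype.sum_prod_type]
    refine Finset.sum_congr rfl fun s' _ => ?_
    show ∑ a' : A, ∑ p : S × A, dDist P2 pol2 ρ0 t p * (P2 p.1 p.2 s').toReal
        * |(pol1 s' a').toReal - (pol2 s' a').toReal| = _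
    rw [Finset.sum_comm, dDist_marg]
    rw [← Finset.sum_mul_sum]

private lemma pmf_l1_le_two {X : Type*} [Fintype X] (q1 q2 : PMF X) :
    ∑ x : X, |(q1 x).toReal - (q2 x).toReal| ≤ 2 := by
  calc ∑ x : X, |(q1 x).toReal - (q2 x).toReal|
      ≤ ∑ x : X, ((q1 x).toReal + (q2 x).toReal) := by
        refine Finset.sum_le_sum fun x _ => ?_
        refine le_trans (abs_sub _ _) ?_
        rw [abs_of_nonneg ENNReal.toReal_nonneg, abs_of_nonneg ENNReal.toReal_nonneg]
    _ = 2 := by rw [Finset.sum_add_distrib, pmf_sum_toReal, pmf_sum_toReal]; norm_num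

private lemma l1_dDist_le_two (P1 P2 : S → A → PMF S) (pol1 pol2 : S → PMF A)
    (ρ0 : PMF S) (t : ℕ) :
    ∑ p : S × A, |dDist P1 pol1 ρ0 t p - dDist P2 pol2 ρ0 t p| ≤ 2 := by
  calc ∑ p : S × A, |dDist P1 pol1 ρ0 t p - dDist P2 pol2 ρ0 t p|
      ≤ ∑ p : S × A, (dDist P1 pol1 ρ0 t p + dDist P2 pol2 ρ0 t p) := by
        refine Finset.sum_le_sum fun p _ => ?_
        refine le_trans (abs_sub _ _) ?_
        rw [abs_of_nonneg (dDist_nonneg P1 pol1 ρ0 t p),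
          abs_of_nonneg (dDist_nonneg P2 pol2 ρ0 t p)]
    _ = 2 := by
        rw [Finset.sum_add_distrib, dDist_sum_one, dDist_sum_one]; norm_num

private lemma summable_geom {γ : ℝ} (hγ0 : 0 ≤ γ) (hγ1 : γ < 1) {x : ℕ → ℝ} {C : ℝ}
    (h : ∀ t, |x t| ≤ C) : Summable fun t => γ ^ t * x t := by
  refine Summable.of_norm_bounded (g := fun t => C * γ ^ t)
    ((summable_geometric_of_lt_one hγ0 hγ1).mul_left C) fun t => ?_
  rw [norm_mul, norm_pow, Real.norm_eq_abs, Real.norm_eq_abs, abs_of_nonneg hγ0]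
  calc γ ^ t * |x t| ≤ γ ^ t * C := by
        have := h t
        have h2 : (0:ℝ) ≤ γ ^ t := pow_nonneg hγ0 t
        nlinarith
    _ = C * γ ^ t := mul_comm _ _

private lemma sum_dr_abs_le (P : S → A → PMF S) (pol : S → PMF A) (ρ0 : PMF S)
    (r : S → A → ℝ) {rmax : ℝ} (hr : ∀ s a, |r s a| ≤ rmax) (t : ℕ) :
    |∑ p : S × A, dDist P pol ρ0 t p * r p.1 p.2| ≤ rmax := by
  calc |∑ p : S × A, dDist P pol ρ0 t p * r p.1 p.2|
      ≤ ∑ p : S × A, |dDist P pol ρ0 t p * r p.1 p.2| := Finset.abs_sum_le_sum_abs _ _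
    _ ≤ ∑ p : S × A, dDist P pol ρ0 t p * rmax := by
        refine Finset.sum_le_sum fun p _ => ?_
        rw [abs_mul, abs_of_nonneg (dDist_nonneg P pol ρ0 t p)]
        exact mul_le_mul_of_nonneg_left (hr p.1 p.2) (dDist_nonneg P pol ρ0 t p)
    _ = rmax := by rw [← Finset.sum_mul, dDist_sum_one, one_mul]

private lemma l1_base (P1 P2 : S → A → PMF S) (pol1 pol2 : S → PMF A) (ρ0 : PMF S) :
    ∑ p : S × A, |dDist P1 pol1 ρ0 0 p - dDist P2 pol2 ρ0 0 p| ≤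
      ∑ s : S, (∑ a' : A, dDist P2 pol2 ρ0 0 (s, a')) *
        ∑ b : A, |(pol1 s b).toReal - (pol2 s b).toReal| := by
  refine le_of_eq ?_
  show ∑ p : S × A, |(ρ0 p.1).toReal * (pol1 p.1 p.2).toReal
      - (ρ0 p.1).toReal * (pol2 p.1 p.2).toReal| = _
  rw [Fintype.sum_prod_type]
  refine Finset.sum_congr rfl fun s _ => ?_
  have h1 : ∑ a' : A, dDist P2 pol2 ρ0 0 (s, a') = (ρ0 s).toReal := by
    show ∑ a' : A, (ρ0 s).toReal * (pol2 s a').toReal = _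
    rw [← Finset.mul_sum, pmf_sum_toReal, mul_one]
  rw [h1, Finset.mul_sum]
  refine Finset.sum_congr rfl fun b _ => ?_
  rw [← mul_sub, abs_mul, abs_of_nonneg ENNReal.toReal_nonneg]

private lemma occ_nonneg {γ : ℝ} (hγ0 : 0 ≤ γ) (P : S → A → PMF S) (pol : S → PMF A)
    (ρ0 : PMF S) (hγ1 : γ < 1) (p : S × A) : 0 ≤ occ P pol ρ0 γ p :=
  mul_nonneg (by linarith) (tsum_nonneg fun t =>
    mul_nonneg (pow_nonneg hγ0 t) (dDist_nonneg P pol ρ0 t p))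

private lemma tsum_rec_bound {γ : ℝ} (hγ0 : 0 ≤ γ) (hγ1 : γ < 1)
    {x y z : ℕ → ℝ}
    (hx : ∀ t, |x t| ≤ 2) (hy : ∀ t, |y t| ≤ 2) (hz : ∀ t, |z t| ≤ 2)
    (hbase : x 0 ≤ z 0) (hrec : ∀ t, x (t+1) ≤ x t + y t + z (t+1)) :
    (1-γ) * ∑' t : ℕ, γ^t * x t ≤ γ * (∑' t : ℕ, γ^t * y t) + ∑' t : ℕ, γ^t * z t := by
  have hSx := summable_geom hγ0 hγ1 hx
  have hSy := summable_geom hγ0 hγ1 hy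
  have hSz := summable_geom hγ0 hγ1 hz
  have hSx' : Summable fun t : ℕ => γ^(t+1) * x (t+1) :=
    (summable_nat_add_iff 1).mpr hSx
  have hSz' : Summable fun t : ℕ => γ^(t+1) * z (t+1) :=
    (summable_nat_add_iff 1).mpr hSz
  have h0 : ∑' t : ℕ, γ^t * x t = γ^0 * x 0 + ∑' t : ℕ, γ^(t+1) * x (t+1) :=
    Summable.tsum_eq_zero_add hSx
  have hz0 : ∑' t : ℕ, γ^t * z t = γ^0 * z 0 + ∑' t : ℕ, γ^(t+1) * z (t+1) :=
    Summable.tsum_eq_zero_add hSz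
  rw [pow_zero, one_mul] at h0 hz0
  have hstep : ∑' t : ℕ, γ^(t+1) * x (t+1)
      ≤ ∑' t : ℕ, (γ*(γ^t * x t) + γ*(γ^t * y t) + γ^(t+1) * z (t+1)) := by
    refine Summable.tsum_le_tsum (fun t => ?_) hSx'
      (((hSx.mul_left γ).add (hSy.mul_left γ)).add hSz')
    have h3 := mul_le_mul_of_nonneg_left (hrec t) (pow_nonneg hγ0 (t+1))
    calc γ^(t+1) * x (t+1) ≤ γ^(t+1) * (x t + y t + z (t+1)) := h3
      _ = γ*(γ^t * x t) + γ*(γ^t * y t) + γ^(t+1) * z (t+1) := by ring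
  have hsplit : ∑' t : ℕ, (γ*(γ^t * x t) + γ*(γ^t * y t) + γ^(t+1) * z (t+1))
      = γ * (∑' t : ℕ, γ^t * x t) + γ * (∑' t : ℕ, γ^t * y t)
        + ∑' t : ℕ, γ^(t+1) * z (t+1) := by
    rw [Summable.tsum_add ((hSx.mul_left γ).add (hSy.mul_left γ)) hSz',
      Summable.tsum_add (hSx.mul_left γ) (hSy.mul_left γ), tsum_mul_left, tsum_mul_left]
  rw [hsplit] at hstep
  have hexp : (1-γ) * ∑' t : ℕ, γ^t * x t
      = (∑' t : ℕ, γ^t * x t) - γ * ∑' t : ℕ, γ^t * x t := by ring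
  linarith

private lemma tsum_swap_occ {γ : ℝ} (hγ0 : 0 ≤ γ) (hγ1 : γ < 1)
    (P : S → A → PMF S) (pol : S → PMF A) (ρ0 : PMF S) (g : S × A → ℝ)
    (hg : ∀ p, |g p| ≤ 2) :
    (1-γ) * ∑' t : ℕ, γ^t * ∑ p : S × A, dDist P pol ρ0 t p * g p
      = ∑ p : S × A, occ P pol ρ0 γ p * g p := by
  have h1 : ∀ t : ℕ, γ^t * ∑ p : S × A, dDist P pol ρ0 t p * g p
      = ∑ p : S × A, γ^t * (dDist P pol ρ0 t p * g p) := fun t => Finset.mul_sum _ _ _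
  have hS : ∀ p : S × A, Summable fun t : ℕ => γ^t * (dDist P pol ρ0 t p * g p) := by
    intro p
    refine summable_geom hγ0 hγ1 (C := 2) fun t => ?_
    rw [abs_mul, abs_of_nonneg (dDist_nonneg P pol ρ0 t p)]
    calc dDist P pol ρ0 t p * |g p| ≤ 1 * 2 := by
          refine mul_le_mul (dDist_le_one P pol ρ0 t p) (hg p) (abs_nonneg _) zero_le_one
      _ = 2 := one_mul 2
  rw [tsum_congr h1, Summable.tsum_finsetSum (fun p _ => hS p), Finset.mul_sum]
  refine Finset.sum_congr rfl fun p _ => ?_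
  have h2 : ∀ t : ℕ, γ^t * (dDist P pol ρ0 t p * g p) = (γ^t * dDist P pol ρ0 t p) * g p :=
    fun t => by ring
  rw [tsum_congr h2, tsum_mul_right, occ]
  ring

end MDPaux

open Real Set in
private noncomputable def hfun (x : ℝ) : ℝ := Real.log x - 3*(x-1)*(x+5)/(2*(x+2)^2)
private noncomputable def gfun (x : ℝ) : ℝ := x * Real.log x - x + 1 - 3*(x-1)^2/(2*(x+2))

private lemma hfun_hasDeriv {x : ℝ} (hx : 0 < x) :
    HasDerivAt hfun (1/x - 27/(x+2)^3) x := by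
  have hx2 : x + 2 ≠ 0 := by linarith
  have hden : 2*(x+2)^2 ≠ 0 := by positivity
  have h1 : HasDerivAt (fun x : ℝ => Real.log x) x⁻¹ x := Real.hasDerivAt_log hx.ne'
  have hn : HasDerivAt (fun x : ℝ => 3*(x-1)*(x+5)) (3*(x-1) + 3*(x+5)) x := by
    have h3 : HasDerivAt (fun x : ℝ => 3*(x-1)) 3 x := by
      simpa using ((hasDerivAt_id x).sub_const 1).const_mul 3
    have h4 := h3.fun_mul ((hasDerivAt_id x).add_const 5)
    refine h4.congr_deriv ?_
    simp only [id_eq, mul_one]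
    ring
  have hd : HasDerivAt (fun x : ℝ => 2*(x+2)^2) (2*(2*(x+2))) x := by
    have : HasDerivAt (fun x : ℝ => (x+2)^2) (2*(x+2)) x := by
      simpa using ((hasDerivAt_id x).add_const 2).fun_pow 2
    exact this.const_mul 2
  have hq := hn.fun_div hd hden
  have := h1.fun_sub hq
  refine this.congr_deriv ?_
  field_simp
  ring

private lemma gfun_hasDeriv {x : ℝ} (hx : 0 < x) :
    HasDerivAt gfun (hfun x) x := by
  have hx2 : x + 2 ≠ 0 := by linarith
  have hden : 2*(x+2) ≠ 0 := by positivity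
  have h1 : HasDerivAt (fun x : ℝ => x * Real.log x) (Real.log x + 1) x := by
    have := (hasDerivAt_id x).fun_mul (Real.hasDerivAt_log hx.ne')
    refine this.congr_deriv ?_
    field_simp
    simp only [id_eq]
    ring
  have hn : HasDerivAt (fun x : ℝ => 3*(x-1)^2) (3*(2*(x-1))) x := by
    have : HasDerivAt (fun x : ℝ => (x-1)^2) (2*(x-1)) x := by
      simpa using ((hasDerivAt_id x).sub_const 1).fun_pow 2
    exact this.const_mul 3
  have hd : HasDerivAt (fun x : ℝ => 2*(x+2)) 2 x := by
    simpa using ((hasDerivAt_id x).add_const 2).const_mul 2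
  have hq := hn.fun_div hd hden
  have h2 := ((h1.fun_sub (hasDerivAt_id x)).add_const 1).fun_sub hq
  refine h2.congr_deriv ?_
  unfold hfun
  field_simp
  ring

private lemma hfun_mono : MonotoneOn hfun (Set.Ioi (0:ℝ)) := by
  have hdiff : ∀ x ∈ Set.Ioi (0:ℝ), HasDerivAt hfun (1/x - 27/(x+2)^3) x :=
    fun x hx => hfun_hasDeriv hx
  apply monotoneOn_of_deriv_nonneg (convex_Ioi 0)
  · exact fun x hx => (hdiff x hx).differentiableAt.continuousAt.continuousWithinAt
  · rw [interior_Ioi]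
    exact fun x hx => (hdiff x hx).differentiableAt.differentiableWithinAt
  · rw [interior_Ioi]
    intro x hx
    rw [(hdiff x hx).deriv]
    rw [Set.mem_Ioi] at hx
    rw [sub_nonneg, div_le_div_iff₀ (by positivity) (by positivity)]
    nlinarith [sq_nonneg (x-1), hx.le]

private lemma hfun_one : hfun 1 = 0 := by simp [hfun]

private lemma gfun_one : gfun 1 = 0 := by norm_num [gfun]

private lemma gfun_nonneg {x : ℝ} (hx : 0 < x) : 0 ≤ gfun x := by
  rcases le_or_gt x 1 with hle | hgt
  · have ganti : AntitoneOn gfun (Set.Ioc (0:ℝ) 1) := by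
      apply antitoneOn_of_deriv_nonpos (convex_Ioc 0 1)
      · exact fun y hy => (gfun_hasDeriv hy.1).differentiableAt.continuousAt.continuousWithinAt
      · rw [interior_Ioc]
        exact fun y hy => (gfun_hasDeriv hy.1).differentiableAt.differentiableWithinAt
      · rw [interior_Ioc]
        intro y hy
        rw [(gfun_hasDeriv hy.1).deriv]
        have := hfun_mono hy.1 (by norm_num : (1:ℝ) ∈ Set.Ioi (0:ℝ)) hy.2.le
        rw [hfun_one] at this
        exact this
    have := ganti ⟨hx, hle⟩ (by norm_num : (1:ℝ) ∈ Set.Ioc (0:ℝ) 1) hle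
    rwa [gfun_one] at this
  · have gmono : MonotoneOn gfun (Set.Ici (1:ℝ)) := by
      apply monotoneOn_of_deriv_nonneg (convex_Ici 1)
      · exact fun y hy => (gfun_hasDeriv (by simp at hy; linarith)).differentiableAt.continuousAt.continuousWithinAt
      · rw [interior_Ici]
        exact fun y hy => (gfun_hasDeriv (by simp at hy; linarith)).differentiableAt.differentiableWithinAt
      · rw [interior_Ici]
        intro y hy
        rw [Set.mem_Ioi] at hy
        rw [(gfun_hasDeriv (by linarith)).deriv]
        have := hfun_mono (by norm_num : (1:ℝ) ∈ Set.Ioi (0:ℝ)) (by simp; linarith) hy.le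
        rwa [hfun_one] at this
    have := gmono (by norm_num : (1:ℝ) ∈ Set.Ici (1:ℝ)) (Set.mem_Ici.2 hgt.le) hgt.le
    rwa [gfun_one] at this

/-- pointwise Pinsker bound -/
private lemma pointwise_kl {p q : ℝ} (hp : 0 ≤ p) (hq : 0 < q) :
    3*(p-q)^2/(2*(p+2*q)) ≤ p * Real.log (p/q) - p + q := by
  rcases eq_or_lt_of_le hp with h0 | hp0
  · have hq' : q ≠ 0 := hq.ne'
    rw [← h0]
    have he : 3*((0:ℝ)-q)^2/(2*(0+2*q)) = 3*q/4 := by field_simp; ring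
    rw [he]
    simp only [zero_mul, zero_sub, zero_add, neg_zero]
    linarith
  · have key := gfun_nonneg (show 0 < p/q by positivity)
    unfold gfun at key
    have hq' : q ≠ 0 := hq.ne'
    have hpq : p + 2*q ≠ 0 := by positivity
    rw [← sub_nonneg]
    have he : p * Real.log (p/q) - p + q - 3*(p-q)^2/(2*(p+2*q))
        = q * (p/q * Real.log (p/q) - p/q + 1 - 3*(p/q-1)^2/(2*(p/q+2))) := by
      field_simp
    rw [he]
    exact mul_nonneg hq.le key

private lemma pinsker_sq {X : Type*} [Fintype X] (p q : PMF X) (hq : ∀ x, 0 < q x) :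
    2 * (dTV p q)^2 ≤ dKL p q := by
  set P : X → ℝ := fun x => (p x).toReal with hPdef
  set Q : X → ℝ := fun x => (q x).toReal with hQdef
  have hP : ∀ x, 0 ≤ P x := fun x => ENNReal.toReal_nonneg
  have hQ : ∀ x, 0 < Q x := fun x => ENNReal.toReal_pos (hq x).ne' (q.apply_ne_top x)
  have hsP : ∑ x, P x = 1 := pmf_sum_toReal p
  have hsQ : ∑ x, Q x = 1 := pmf_sum_toReal q
  set w : X → ℝ := fun x => 2*(P x + 2*Q x)/3 with hwdef
  have hw : ∀ x, 0 < w x := fun x => by have := hP x; have := hQ x; positivity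
  have hsw : ∑ x, w x = 2 := by
    simp only [hwdef]
    rw [← Finset.sum_div]
    have h6 : ∑ i : X, 2 * (P i + 2 * Q i) = 6 := by
      rw [Finset.sum_congr rfl (fun i (_ : i ∈ Finset.univ) => (by ring : 2*(P i + 2*Q i) = 2*P i + 4*Q i)),
        Finset.sum_add_distrib, ← Finset.mul_sum, ← Finset.mul_sum, hsP, hsQ]
      norm_num
    rw [h6]
    norm_num
  -- Cauchy-Schwarz
  have hCS := Finset.sum_mul_sq_le_sq_mul_sq Finset.univ
    (fun x => |P x - Q x| / Real.sqrt (w x)) (fun x => Real.sqrt (w x))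
  have h1 : ∀ x : X, |P x - Q x| / Real.sqrt (w x) * Real.sqrt (w x) = |P x - Q x| := by
    intro x
    exact div_mul_cancel₀ _ (Real.sqrt_pos.2 (hw x)).ne'
  have h2 : ∀ x : X, (|P x - Q x| / Real.sqrt (w x))^2 = (P x - Q x)^2 / w x := by
    intro x
    rw [div_pow, sq_abs, Real.sq_sqrt (hw x).le]
  have h3 : ∀ x : X, (Real.sqrt (w x))^2 = w x := fun x => Real.sq_sqrt (hw x).le
  rw [Finset.sum_congr rfl (fun x _ => h1 x)] at hCS
  rw [Finset.sum_congr rfl (fun x _ => h2 x), Finset.sum_congr rfl (fun x _ => h3 x), hsw] at hCS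
  -- pointwise bound summed
  have h4 : ∑ x, (P x - Q x)^2 / w x ≤ dKL p q := by
    have he : ∀ x : X, (P x - Q x)^2 / w x = 3*(P x - Q x)^2/(2*(P x + 2*Q x)) := by
      intro x
      have h5 := (hw x).ne'
      rw [hwdef]
      field_simp
    rw [Finset.sum_congr rfl (fun x _ => he x)]
    have hb : ∀ x : X, 3*(P x - Q x)^2/(2*(P x + 2*Q x)) ≤ P x * Real.log (P x / Q x) - P x + Q x :=
      fun x => pointwise_kl (hP x) (hQ x)
    calc ∑ x, 3*(P x - Q x)^2/(2*(P x + 2*Q x))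
        ≤ ∑ x, (P x * Real.log (P x / Q x) - P x + Q x) :=
          Finset.sum_le_sum (fun x _ => hb x)
      _ = dKL p q := by
          rw [Finset.sum_add_distrib, Finset.sum_sub_distrib, hsP, hsQ]
          simp [dKL]
          rfl
  have hdtv : ∑ x, |P x - Q x| = 2 * dTV p q := by rw [dTV]; ring
  rw [hdtv] at hCS
  nlinarith [hCS, h4]

private lemma pinsker_sqrt {X : Type*} [Fintype X] (p q : PMF X) (hq : ∀ x, 0 < q x) :
    2 * dTV p q ≤ Real.sqrt 2 * Real.sqrt (dKL p q) := by
  have hp := pinsker_sq p q hq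
  have htv : 0 ≤ dTV p q := by
    apply mul_nonneg (by norm_num)
    exact Finset.sum_nonneg fun x _ => abs_nonneg _
  have hkl : 0 ≤ dKL p q := le_trans (by positivity) hp
  rw [← Real.sqrt_mul (by norm_num : (0:ℝ) ≤ 2)]
  rw [show (2:ℝ) * dTV p q = Real.sqrt ((2 * dTV p q)^2) from (Real.sqrt_sq (by positivity)).symm]
  apply Real.sqrt_le_sqrt
  nlinarith

/-- offline performance bound in dynamics-KL form, Theorem 4 via the
representation–dynamics equivalence: for kernels `P_src, P_tar` with `P_tar` everywhere
positive and policies `pol_D, pol`,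
`J[P_tar](pol) − J[P_src](pol) ≥ −(4·r_max/(1−γ)²) Σ_s ν[P_src,pol_D](s)·D_TV(pol_D(s), pol(s))
 − (√2·γ·r_max/(1−γ)²) Σ_{(s,a)} ρ[P_src,pol_D](s,a)·√(D_KL(P_src(s,a)‖P_tar(s,a)))`. -/
theorem offline_performance_bound_kl
    {S A : Type*} [Fintype S] [Fintype A] [Nonempty S] [Nonempty A]
    (Psrc Ptar : S → A → PMF S) (hpos : ∀ s a s', 0 < Ptar s a s')
    (polD pol : S → PMF A) (ρ0 : PMF S)
    (r : S → A → ℝ) (rmax : ℝ) (hrmax : 0 ≤ rmax) (hr : ∀ s a, |r s a| ≤ rmax)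
    (γ : ℝ) (hγ0 : 0 ≤ γ) (hγ1 : γ < 1) :
    Jret Ptar pol ρ0 r γ - Jret Psrc pol ρ0 r γ ≥
      -(4 * rmax / (1 - γ) ^ 2) *
        (∑ s : S, stateOcc Psrc polD ρ0 γ s * dTV (polD s) (pol s))
      - (Real.sqrt 2 * γ * rmax / (1 - γ) ^ 2) *
        ∑ p : S × A, occ Psrc polD ρ0 γ p *
          Real.sqrt (dKL (Psrc p.1 p.2) (Ptar p.1 p.2)) := by
  have hβ : (0:ℝ) < 1 - γ := by linarith
  set a : ℕ → S × A → ℝ := dDist Psrc polD ρ0 with ha_def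
  set bb : ℕ → S × A → ℝ := dDist Psrc pol ρ0 with hb_def
  set cc : ℕ → S × A → ℝ := dDist Ptar pol ρ0 with hc_def
  set u : S → ℝ := fun s => ∑ x : A, |(pol s x).toReal - (polD s x).toReal| with hu_def
  set w : S × A → ℝ :=
    fun p => ∑ s' : S, |(Ptar p.1 p.2 s').toReal - (Psrc p.1 p.2 s').toReal| with hw_def
  set e : ℕ → ℝ := fun t => ∑ p : S × A, |cc t p - a t p| with he_def
  set f : ℕ → ℝ := fun t => ∑ p : S × A, |bb t p - a t p| with hf_def
  set D : ℕ → ℝ := fun t => ∑ p : S × A, a t p * w p with hD_def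
  set F : ℕ → ℝ := fun t => ∑ p : S × A, a t p * u p.1 with hF_def
  have hFalt : ∀ t : ℕ, (∑ s : S, (∑ a' : A, a t (s, a')) * u s) = F t := by
    intro t
    show ∑ s : S, (∑ a' : A, a t (s, a')) * u s = ∑ p : S × A, a t p * u p.1
    rw [Fintype.sum_prod_type]
    exact Finset.sum_congr rfl fun s _ => Finset.sum_mul _ _ _
  -- recursions
  have hrec_e : ∀ t, e (t+1) ≤ e t + D t + F (t+1) := by
    intro t
    have h2 : e (t+1) ≤ e t + D t + ∑ s : S, (∑ a' : A, a (t+1) (s, a')) * u s :=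
      l1_rec Ptar Psrc pol polD ρ0 t
    rwa [hFalt (t+1)] at h2
  have hrec_f : ∀ t, f (t+1) ≤ f t + (fun _ : ℕ => (0:ℝ)) t + F (t+1) := by
    intro t
    have h2 : f (t+1) ≤ f t
        + (∑ p : S × A, a t p *
            ∑ s' : S, |(Psrc p.1 p.2 s').toReal - (Psrc p.1 p.2 s').toReal|)
        + ∑ s : S, (∑ a' : A, a (t+1) (s, a')) * u s :=
      l1_rec Psrc Psrc pol polD ρ0 t
    rw [hFalt (t+1)] at h2
    simp only [sub_self, abs_zero, Finset.sum_const_zero, mul_zero] at h2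
    simpa using h2
  have hbase_e : e 0 ≤ F 0 := by
    have h2 : e 0 ≤ ∑ s : S, (∑ a' : A, a 0 (s, a')) * u s :=
      l1_base Ptar Psrc pol polD ρ0
    rwa [hFalt 0] at h2
  have hbase_f : f 0 ≤ F 0 := by
    have h2 : f 0 ≤ ∑ s : S, (∑ a' : A, a 0 (s, a')) * u s :=
      l1_base Psrc Psrc pol polD ρ0
    rwa [hFalt 0] at h2
  -- bounds
  have hu_nonneg : ∀ s, 0 ≤ u s := fun s => Finset.sum_nonneg fun x _ => abs_nonneg _
  have hu_le : ∀ s, u s ≤ 2 := fun s => pmf_l1_le_two (pol s) (polD s)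
  have hw_nonneg : ∀ p : S × A, 0 ≤ w p := fun p => Finset.sum_nonneg fun x _ => abs_nonneg _
  have hw_le : ∀ p : S × A, w p ≤ 2 := fun p => pmf_l1_le_two (Ptar p.1 p.2) (Psrc p.1 p.2)
  have ha_nonneg : ∀ t p, 0 ≤ a t p := dDist_nonneg Psrc polD ρ0
  have ha_sum : ∀ t, ∑ p : S × A, a t p = 1 := dDist_sum_one Psrc polD ρ0
  have habs : ∀ (v : S × A → ℝ), (∀ p, 0 ≤ v p) → (∀ p, v p ≤ 2) →
      ∀ t, |∑ p : S × A, a t p * v p| ≤ 2 := by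
    intro v h0 h2 t
    rw [abs_of_nonneg (Finset.sum_nonneg fun p _ => mul_nonneg (ha_nonneg t p) (h0 p))]
    calc ∑ p : S × A, a t p * v p ≤ ∑ p : S × A, a t p * 2 :=
          Finset.sum_le_sum fun p _ => mul_le_mul_of_nonneg_left (h2 p) (ha_nonneg t p)
      _ = 2 := by rw [← Finset.sum_mul, ha_sum, one_mul]
  have hD_le : ∀ t, |D t| ≤ 2 := habs w hw_nonneg hw_le
  have hF_le : ∀ t, |F t| ≤ 2 := habs (fun p => u p.1) (fun p => hu_nonneg p.1)
    (fun p => hu_le p.1)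
  have he_le : ∀ t, |e t| ≤ 2 := by
    intro t
    rw [abs_of_nonneg (Finset.sum_nonneg fun p _ => abs_nonneg _)]
    exact l1_dDist_le_two Ptar Psrc pol polD ρ0 t
  have hf_le : ∀ t, |f t| ≤ 2 := by
    intro t
    rw [abs_of_nonneg (Finset.sum_nonneg fun p _ => abs_nonneg _)]
    exact l1_dDist_le_two Psrc Psrc pol polD ρ0 t
  -- summability
  have hSe : Summable fun t : ℕ => γ^t * e t := summable_geom hγ0 hγ1 he_le
  have hSf : Summable fun t : ℕ => γ^t * f t := summable_geom hγ0 hγ1 hf_le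
  have hSc : Summable fun t : ℕ => γ^t * ∑ p : S × A, cc t p * r p.1 p.2 :=
    summable_geom hγ0 hγ1 (fun t => sum_dr_abs_le Ptar pol ρ0 r hr t)
  have hSb : Summable fun t : ℕ => γ^t * ∑ p : S × A, bb t p * r p.1 p.2 :=
    summable_geom hγ0 hγ1 (fun t => sum_dr_abs_le Psrc pol ρ0 r hr t)
  -- J difference
  have hJeq : Jret Ptar pol ρ0 r γ - Jret Psrc pol ρ0 r γ
      = ∑' t : ℕ, (γ^t * (∑ p : S × A, cc t p * r p.1 p.2)
          - γ^t * (∑ p : S × A, bb t p * r p.1 p.2)) := (Summable.tsum_sub hSc hSb).symm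
  have hJlow : ∀ t : ℕ, (-rmax) * (γ^t * (e t + f t))
      ≤ γ^t * (∑ p : S × A, cc t p * r p.1 p.2)
        - γ^t * (∑ p : S × A, bb t p * r p.1 p.2) := by
    intro t
    have hpt : ∀ p : S × A, (|cc t p - a t p| + |bb t p - a t p|) * (-rmax)
        ≤ (cc t p - bb t p) * r p.1 p.2 := by
      intro p
      have h1 : |cc t p - bb t p| ≤ |cc t p - a t p| + |bb t p - a t p| := by
        have h2 := abs_sub_le (cc t p) (a t p) (bb t p)
        rwa [abs_sub_comm (a t p) (bb t p)] at h2
      have h3 : |(cc t p - bb t p) * r p.1 p.2|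
          ≤ (|cc t p - a t p| + |bb t p - a t p|) * rmax := by
        rw [abs_mul]
        exact mul_le_mul h1 (hr p.1 p.2) (abs_nonneg _) (by positivity)
      have h4 := neg_abs_le ((cc t p - bb t p) * r p.1 p.2)
      have h5 : (|cc t p - a t p| + |bb t p - a t p|) * (-rmax)
          = -((|cc t p - a t p| + |bb t p - a t p|) * rmax) := by ring
      linarith
    have hsum := Finset.sum_le_sum (fun p (_ : p ∈ Finset.univ) => hpt p)
    rw [← Finset.sum_mul, Finset.sum_add_distrib] at hsum
    have hR : ∑ p : S × A, (cc t p - bb t p) * r p.1 p.2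
        = (∑ p : S × A, cc t p * r p.1 p.2) - ∑ p : S × A, bb t p * r p.1 p.2 := by
      rw [← Finset.sum_sub_distrib]
      exact Finset.sum_congr rfl fun p _ => by ring
    rw [hR] at hsum
    have hγt : (0:ℝ) ≤ γ^t := pow_nonneg hγ0 t
    have h6 := mul_le_mul_of_nonneg_left hsum hγt
    calc (-rmax) * (γ^t * (e t + f t)) = γ^t * ((e t + f t) * (-rmax)) := by ring
      _ ≤ γ^t * ((∑ p : S × A, cc t p * r p.1 p.2)
            - ∑ p : S × A, bb t p * r p.1 p.2) := h6
      _ = γ^t * (∑ p : S × A, cc t p * r p.1 p.2)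
            - γ^t * (∑ p : S × A, bb t p * r p.1 p.2) := by ring
  have hJ2 : -rmax * (∑' t : ℕ, γ^t * e t) + -rmax * (∑' t : ℕ, γ^t * f t)
      ≤ Jret Ptar pol ρ0 r γ - Jret Psrc pol ρ0 r γ := by
    rw [hJeq]
    have hSef : Summable fun t : ℕ => γ^t * (e t + f t) :=
      (hSe.add hSf).congr fun t => by ring
    have h := Summable.tsum_le_tsum hJlow (hSef.mul_left (-rmax)) (hSc.sub hSb)
    rw [tsum_mul_left] at h
    have hsplit : ∑' t : ℕ, γ^t * (e t + f t)
        = (∑' t : ℕ, γ^t * e t) + ∑' t : ℕ, γ^t * f t := by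
      rw [← Summable.tsum_add hSe hSf]
      exact tsum_congr fun t => by ring
    rw [hsplit] at h
    have hexp : -rmax * ((∑' t : ℕ, γ^t * e t) + ∑' t : ℕ, γ^t * f t)
        = -rmax * (∑' t : ℕ, γ^t * e t) + -rmax * (∑' t : ℕ, γ^t * f t) := by ring
    linarith
  -- geometric bounds
  have hE := tsum_rec_bound hγ0 hγ1 he_le hD_le hF_le hbase_e hrec_e
  have hFf := tsum_rec_bound hγ0 hγ1 hf_le (fun t => by norm_num) hF_le hbase_f hrec_f
  have hzero : ∑' t : ℕ, γ^t * (fun _ : ℕ => (0:ℝ)) t = 0 := by simp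
  rw [hzero, mul_zero, zero_add] at hFf
  -- occupancy identities
  have hDs : (1-γ) * ∑' t : ℕ, γ^t * D t = ∑ p : S × A, occ Psrc polD ρ0 γ p * w p :=
    tsum_swap_occ hγ0 hγ1 Psrc polD ρ0 w
      (fun p => by rw [abs_of_nonneg (hw_nonneg p)]; exact hw_le p)
  have hFs : (1-γ) * ∑' t : ℕ, γ^t * F t = ∑ p : S × A, occ Psrc polD ρ0 γ p * u p.1 :=
    tsum_swap_occ hγ0 hγ1 Psrc polD ρ0 (fun p => u p.1)
      (fun p => by rw [abs_of_nonneg (hu_nonneg p.1)]; exact hu_le p.1)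
  have hstate : ∑ p : S × A, occ Psrc polD ρ0 γ p * u p.1
      = ∑ s : S, stateOcc Psrc polD ρ0 γ s * u s := by
    rw [Fintype.sum_prod_type]
    refine Finset.sum_congr rfl fun s _ => ?_
    rw [stateOcc, Finset.sum_mul]
  -- TV / KL rewrites
  have hu_tv : ∀ s : S, u s = 2 * dTV (polD s) (pol s) := by
    intro s
    have h1 : u s = ∑ x : A, |(polD s x).toReal - (pol s x).toReal| :=
      Finset.sum_congr rfl fun x _ => abs_sub_comm _ _
    rw [h1, dTV]
    ring
  have hw_tv : ∀ p : S × A, w p = 2 * dTV (Psrc p.1 p.2) (Ptar p.1 p.2) := by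
    intro p
    have h1 : w p = ∑ s' : S, |(Psrc p.1 p.2 s').toReal - (Ptar p.1 p.2 s').toReal| :=
      Finset.sum_congr rfl fun s' _ => abs_sub_comm _ _
    rw [h1, dTV]
    ring
  have hWkl : ∀ p : S × A, w p ≤ Real.sqrt 2 * Real.sqrt (dKL (Psrc p.1 p.2) (Ptar p.1 p.2)) := by
    intro p
    rw [hw_tv p]
    exact pinsker_sqrt (Psrc p.1 p.2) (Ptar p.1 p.2) (fun s' => hpos p.1 p.2 s')
  set X := ∑ s : S, stateOcc Psrc polD ρ0 γ s * dTV (polD s) (pol s) with hX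
  set Y := ∑ p : S × A, occ Psrc polD ρ0 γ p *
      Real.sqrt (dKL (Psrc p.1 p.2) (Ptar p.1 p.2)) with hY
  have hocc_nn : ∀ p : S × A, 0 ≤ occ Psrc polD ρ0 γ p :=
    occ_nonneg hγ0 Psrc polD ρ0 hγ1
  have hDS_le : ∑ p : S × A, occ Psrc polD ρ0 γ p * w p ≤ Real.sqrt 2 * Y := by
    rw [hY, Finset.mul_sum]
    refine Finset.sum_le_sum fun p _ => ?_
    calc occ Psrc polD ρ0 γ p * w p
        ≤ occ Psrc polD ρ0 γ p *
            (Real.sqrt 2 * Real.sqrt (dKL (Psrc p.1 p.2) (Ptar p.1 p.2))) :=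
          mul_le_mul_of_nonneg_left (hWkl p) (hocc_nn p)
      _ = Real.sqrt 2 * (occ Psrc polD ρ0 γ p *
            Real.sqrt (dKL (Psrc p.1 p.2) (Ptar p.1 p.2))) := by ring
  have hFS_eq : ∑ p : S × A, occ Psrc polD ρ0 γ p * u p.1 = 2 * X := by
    rw [hstate, hX, Finset.mul_sum]
    refine Finset.sum_congr rfl fun s _ => ?_
    rw [hu_tv s]
    ring
  -- final arithmetic
  set E := ∑' t : ℕ, γ^t * e t with hE_def
  set Ff2 := ∑' t : ℕ, γ^t * f t with hFf_def
  set Ds := ∑' t : ℕ, γ^t * D t with hDs_def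
  set Fs := ∑' t : ℕ, γ^t * F t with hFs_def
  have hFs2 : (1-γ) * Fs = 2 * X := by rw [hFs, hFS_eq]
  have k1 : (1-γ)*((1-γ)*E) ≤ (1-γ)*(γ*Ds + Fs) :=
    mul_le_mul_of_nonneg_left hE (le_of_lt hβ)
  have k2 : (1-γ)*(γ*Ds + Fs) = γ*((1-γ)*Ds) + ((1-γ)*Fs) := by ring
  rw [k2, hDs, hFs2] at k1
  have k3 : γ * (∑ p : S × A, occ Psrc polD ρ0 γ p * w p) ≤ γ * (Real.sqrt 2 * Y) :=
    mul_le_mul_of_nonneg_left hDS_le hγ0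
  have k4 : (1-γ)*((1-γ)*Ff2) ≤ (1-γ)*Fs :=
    mul_le_mul_of_nonneg_left hFf (le_of_lt hβ)
  rw [hFs2] at k4
  have k5 : (1-γ)^2*(E+Ff2) = (1-γ)*((1-γ)*E) + (1-γ)*((1-γ)*Ff2) := by ring
  have hsum : (1-γ)^2*(E+Ff2) ≤ Real.sqrt 2 * γ * Y + 4*X := by nlinarith [k1, k3, k4, k5]
  have h1 : rmax*(E+Ff2) = (rmax/(1-γ)^2) * ((1-γ)^2*(E+Ff2)) := by
    field_simp
  have h2 : (rmax/(1-γ)^2) * ((1-γ)^2*(E+Ff2))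
      ≤ (rmax/(1-γ)^2) * (Real.sqrt 2 * γ * Y + 4*X) :=
    mul_le_mul_of_nonneg_left hsum (by positivity)
  have h3 : (rmax/(1-γ)^2) * (Real.sqrt 2 * γ * Y + 4*X)
      = (4*rmax/(1-γ)^2)*X + (Real.sqrt 2*γ*rmax/(1-γ)^2)*Y := by ring
  rw [ge_iff_le]
  linarith [hJ2, h1, h2, h3]
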